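/- arXiv:2511.13209 — 2 statements merged into one kernel-verified Lean document; each statement's English description precedes it below -/
import Mathlib

section
/- Let T be a 1.5D terrain and let A* be the maximum area of a convex quadrilateral contained in T, and R* the maximum area of an axis-parallel rectangle contained in T (both maxima assumed attained). Then R* ≥ (1/2)·A*. -/
open MeasureTheory

def ConvexPos (a b c d : ℝ × ℝ) : Prop :=
  a ∉ convexHull ℝ ({b, c, d} : Set (ℝ × ℝ)) ∧
  b ∉ convexHull ℝ ({a, c, d} : Set (ℝ × ℝ)) ∧
  c ∉ convexHull ℝ ({a, b, d} : Set (ℝ × ℝ)) ∧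
  d ∉ convexHull ℝ ({a, b, c} : Set (ℝ × ℝ))

/-- `S` is a convex quadrilateral: the convex hull of four points in convex position. -/
def IsQuad (S : Set (ℝ × ℝ)) : Prop :=
  ∃ p₁ p₂ p₃ p₄ : ℝ × ℝ, ConvexPos p₁ p₂ p₃ p₄ ∧
    S = convexHull ℝ ({p₁, p₂, p₃, p₄} : Set (ℝ × ℝ))

/-- `S` is a (nondegenerate) axis-parallel rectangle. -/
def IsRect (S : Set (ℝ × ℝ)) : Prop :=
  ∃ p q c d : ℝ, p < q ∧ c < d ∧ S = (Set.Icc p q ×ˢ Set.Icc c d : Set (ℝ × ℝ))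


/-!
Slice a compact convex set `Q` in the upper half-plane horizontally: the width `w t` of the
slice at height `t` is concave in `t`. Take a horizontal chord of `Q` maximising height times
length, at height `tₘ`. The rectangle below it lies in the terrain, which is closed downwards, and
`t * w t ≤ tₘ * w tₘ` for all `t`. Concavity and this maximality force
`w t ≤ (2 - t / tₘ) * w tₘ`, hence `area Q = ∫ w ≤ ∫₀^{2 tₘ} (2 - t / tₘ) * w tₘ dt = 2 tₘ w tₘ`.
-/

open MeasureTheory Set Filter Topology

def horizontalSlice (K : Set (ℝ × ℝ)) (t : ℝ) : Set ℝ := {x | (x, t) ∈ K}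

noncomputable def sliceWidth (K : Set (ℝ × ℝ)) (t : ℝ) : ℝ :=
  (volume (horizontalSlice K t)).toReal

section Slices

variable {K : Set (ℝ × ℝ)}

theorem Convex.add_mem_horizontalSlice (hK : Convex ℝ K) {x₁ x₂ t₁ t₂ u v : ℝ}
    (h₁ : x₁ ∈ horizontalSlice K t₁) (h₂ : x₂ ∈ horizontalSlice K t₂)
    (hu : 0 ≤ u) (hv : 0 ≤ v) (huv : u + v = 1) :
    u * x₁ + v * x₂ ∈ horizontalSlice K (u * t₁ + v * t₂) :=
  hK h₁ h₂ hu hv huv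

theorem Convex.horizontalSlice (hK : Convex ℝ K) (t : ℝ) : Convex ℝ (horizontalSlice K t) := by
  intro x₁ h₁ x₂ h₂ u v hu hv huv
  have h := hK.add_mem_horizontalSlice h₁ h₂ hu hv huv
  rwa [← add_mul, huv, one_mul] at h

theorem IsCompact.horizontalSlice (hK : IsCompact K) (t : ℝ) :
    IsCompact (horizontalSlice K t) :=
  (hK.image continuous_fst).of_isClosed_subset
    (hK.isClosed.preimage (continuous_id.prodMk continuous_const)) fun x hx => ⟨(x, t), hx, rfl⟩

theorem horizontalSlice_nonempty_iff {t : ℝ} :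
    (horizontalSlice K t).Nonempty ↔ t ∈ Prod.snd '' K :=
  ⟨fun ⟨x, hx⟩ => ⟨(x, t), hx, rfl⟩, fun ⟨p, hp, hpt⟩ => ⟨p.1, by rwa [← hpt]⟩⟩

theorem horizontalSlice_eq_Icc (hKc : IsCompact K) (hK : Convex ℝ K) {t : ℝ}
    (ht : t ∈ Prod.snd '' K) :
    horizontalSlice K t = Icc (sInf (horizontalSlice K t)) (sSup (horizontalSlice K t)) :=
  eq_Icc_of_connected_compact
    ⟨horizontalSlice_nonempty_iff.2 ht, (hK.horizontalSlice t).isPreconnected⟩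
    (hKc.horizontalSlice t)

theorem sliceWidth_eq (hKc : IsCompact K) (hK : Convex ℝ K) {t : ℝ}
    (ht : t ∈ Prod.snd '' K) :
    sliceWidth K t = sSup (horizontalSlice K t) - sInf (horizontalSlice K t) := by
  have hne := horizontalSlice_nonempty_iff.2 ht
  have hS := hKc.horizontalSlice t
  rw [sliceWidth]
  conv_lhs => rw [horizontalSlice_eq_Icc hKc hK ht]
  rw [Real.volume_Icc,
    ENNReal.toReal_ofReal (sub_nonneg.2 (csInf_le_csSup hne hS.bddBelow hS.bddAbove))]

theorem sInf_mem_horizontalSlice (hKc : IsCompact K) {t : ℝ} (ht : t ∈ Prod.snd '' K) :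
    sInf (horizontalSlice K t) ∈ horizontalSlice K t :=
  (hKc.horizontalSlice t).sInf_mem (horizontalSlice_nonempty_iff.2 ht)

theorem sSup_mem_horizontalSlice (hKc : IsCompact K) {t : ℝ} (ht : t ∈ Prod.snd '' K) :
    sSup (horizontalSlice K t) ∈ horizontalSlice K t :=
  (hKc.horizontalSlice t).sSup_mem (horizontalSlice_nonempty_iff.2 ht)

theorem concaveOn_sliceWidth (hKc : IsCompact K) (hK : Convex ℝ K) :
    ConcaveOn ℝ (Prod.snd '' K) (sliceWidth K) := by
  refine ⟨hK.linear_image (LinearMap.snd ℝ ℝ ℝ), ?_⟩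
  intro t₁ ht₁ t₂ ht₂ u v hu hv huv
  have ht : u • t₁ + v • t₂ ∈ Prod.snd '' K :=
    hK.linear_image (LinearMap.snd ℝ ℝ ℝ) ht₁ ht₂ hu hv huv
  simp only [smul_eq_mul] at ht ⊢
  have hinf := csInf_le (hKc.horizontalSlice _).bddBelow <| hK.add_mem_horizontalSlice
    (sInf_mem_horizontalSlice hKc ht₁) (sInf_mem_horizontalSlice hKc ht₂) hu hv huv
  have hsup := le_csSup (hKc.horizontalSlice _).bddAbove <| hK.add_mem_horizontalSlice
    (sSup_mem_horizontalSlice hKc ht₁) (sSup_mem_horizontalSlice hKc ht₂) hu hv huv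
  rw [sliceWidth_eq hKc hK ht₁, sliceWidth_eq hKc hK ht₂, sliceWidth_eq hKc hK ht]
  linear_combination hsup + hinf

theorem volume_eq_setLIntegral_sliceWidth (hKc : IsCompact K) :
    volume K = ∫⁻ t in Prod.snd '' K, ENNReal.ofReal (sliceWidth K t) := by
  have hslice : ∀ t, volume (horizontalSlice K t) = ENNReal.ofReal (sliceWidth K t) := fun t =>
    (ENNReal.ofReal_toReal (hKc.horizontalSlice t).measure_lt_top.ne).symm
  rw [Measure.volume_eq_prod, Measure.prod_apply_symm hKc.measurableSet]
  simp only [← hslice]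
  refine (setLIntegral_eq_of_support_subset fun t ht => ?_).symm
  exact horizontalSlice_nonempty_iff.1 (nonempty_of_measure_ne_zero ht)

theorem IsCompact.exists_isMaxOn_height_mul_chord (hK : IsCompact K) (hne : K.Nonempty) :
    ∃ x₁ x₂ t, (x₁, t) ∈ K ∧ (x₂, t) ∈ K ∧
      ∀ y₁ y₂ s, (y₁, s) ∈ K → (y₂, s) ∈ K → s * (y₂ - y₁) ≤ t * (x₂ - x₁) := by
  have hchords : IsCompact {pq ∈ K ×ˢ K | pq.1.2 = pq.2.2} :=
    (hK.prod hK).inter_right (isClosed_eq (by fun_prop) (by fun_prop))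
  obtain ⟨p, hp⟩ := hne
  obtain ⟨⟨⟨x₁, t⟩, ⟨x₂, t'⟩⟩, ⟨⟨h₁, h₂⟩, htt' : t = t'⟩, hmax⟩ :=
    hchords.exists_isMaxOn ⟨(p, p), ⟨hp, hp⟩, rfl⟩ (f := fun pq => pq.1.2 * (pq.2.1 - pq.1.1))
      (by fun_prop)
  subst htt'
  exact ⟨x₁, x₂, t, h₁, h₂, fun y₁ y₂ s hy₁ hy₂ =>
    isMaxOn_iff.1 hmax ((y₁, s), (y₂, s)) ⟨⟨hy₁, hy₂⟩, rfl⟩⟩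

end Slices

theorem integral_Icc_two_sub_div_mul {c w : ℝ} (hc : 0 < c) :
    ∫ t in Icc 0 (2 * c), (2 - t / c) * w = 2 * (c * w) := by
  have hint : IntervalIntegrable (fun t : ℝ => t / c) volume 0 (2 * c) :=
    (continuous_id.div_const c).intervalIntegrable _ _
  rw [integral_Icc_eq_integral_Ioc, ← intervalIntegral.integral_of_le (by positivity),
    intervalIntegral.integral_mul_const, intervalIntegral.integral_sub intervalIntegrable_const
    hint, intervalIntegral.integral_const, intervalIntegral.integral_div, integral_id, smul_eq_mul]
  field_simp
  ring

section Concave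

variable {s : Set ℝ} {W : ℝ → ℝ} {tₘ : ℝ}

theorem ConcaveOn.le_two_sub_div_mul_of_isMaxOn (hs : ∀ t ∈ s, 0 ≤ t) (hW : ConcaveOn ℝ s W)
    (htₘ : tₘ ∈ s) (htₘ0 : 0 < tₘ) (hmax : IsMaxOn (fun t => t * W t) s tₘ) :
    ∀ t₀ ∈ s, W t₀ ≤ (2 - t₀ / tₘ) * W tₘ := by
  intro t₀ ht₀
  -- Otherwise, moving from `tₘ` slightly towards `t₀` along the chord would increase `t * W t`.
  by_contra! hlt
  set B := (t₀ - tₘ) * W tₘ + tₘ * (W t₀ - W tₘ)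
  set C := (t₀ - tₘ) * (W t₀ - W tₘ)
  have hB : 0 < B := by
    have h := mul_lt_mul_of_pos_left hlt htₘ0
    rw [← mul_assoc, mul_sub, mul_div_cancel₀ _ htₘ0.ne'] at h
    linarith
  obtain ⟨l, ⟨hl0, hl1⟩, hl⟩ : ∃ l ∈ Ioc (0 : ℝ) 1, 0 < B + C * l := by
    have hlim : Tendsto (fun l => B + C * l) (𝓝[>] 0) (𝓝 B) := by
      have hcont : Continuous fun l => B + C * l := by fun_prop
      simpa only [mul_zero, add_zero] using (hcont.tendsto 0).mono_left nhdsWithin_le_nhds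
    exact (Filter.Eventually.and (Ioc_mem_nhdsGT one_pos)
      (hlim.eventually (lt_mem_nhds hB))).exists
  have ht := hW.1 ht₀ htₘ hl0.le (sub_nonneg.2 hl1) (add_sub_cancel _ _)
  have hchord := hW.2 ht₀ htₘ hl0.le (sub_nonneg.2 hl1) (add_sub_cancel _ _)
  have hle := isMaxOn_iff.1 hmax _ ht
  simp only [smul_eq_mul] at ht hchord hle
  have hgrow : (l * t₀ + (1 - l) * tₘ) * (l * W t₀ + (1 - l) * W tₘ) =
      tₘ * W tₘ + l * (B + C * l) := by
    ring
  nlinarith [mul_le_mul_of_nonneg_left hchord (hs _ ht), mul_pos hl0 hl]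

theorem ConcaveOn.setLIntegral_le_of_isMaxOn (hs : ∀ t ∈ s, 0 ≤ t) (hW : ConcaveOn ℝ s W)
    (hW0 : ∀ t ∈ s, 0 ≤ W t) (htₘ : tₘ ∈ s) (hmax : IsMaxOn (fun t => t * W t) s tₘ) :
    ∫⁻ t in s, ENNReal.ofReal (W t) ≤ ENNReal.ofReal (2 * (tₘ * W tₘ)) := by
  have hsm : MeasurableSet s := hW.1.ordConnected.measurableSet
  by_cases hpos : 0 < tₘ ∧ 0 < W tₘ
  swap
  · have hM : tₘ * W tₘ = 0 := by
      rcases not_and_or.1 hpos with h | h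
      · rw [le_antisymm (not_lt.1 h) (hs _ htₘ), zero_mul]
      · rw [le_antisymm (not_lt.1 h) (hW0 _ htₘ), mul_zero]
    calc ∫⁻ t in s, ENNReal.ofReal (W t) ≤ ∫⁻ _ in s, 0 := by
          refine setLIntegral_mono_ae' hsm ?_
          filter_upwards [volume.ae_ne 0] with t ht0 ht
          have hWt : W t ≤ 0 := nonpos_of_mul_nonpos_right (hM ▸ isMaxOn_iff.1 hmax t ht)
            ((hs t ht).lt_of_ne' ht0)
          rw [ENNReal.ofReal_eq_zero.2 hWt]
      _ ≤ _ := by simp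
  obtain ⟨htₘ0, hWₘ⟩ := hpos
  have hbound := hW.le_two_sub_div_mul_of_isMaxOn hs htₘ htₘ0 hmax
  have hsub : s ⊆ Icc 0 (2 * tₘ) := fun t ht => by
    have h := nonneg_of_mul_nonneg_left ((hW0 t ht).trans (hbound t ht)) hWₘ
    rw [sub_nonneg, div_le_iff₀ htₘ0] at h
    exact ⟨hs t ht, by linarith⟩
  calc ∫⁻ t in s, ENNReal.ofReal (W t)
      ≤ ∫⁻ t in s, ENNReal.ofReal ((2 - t / tₘ) * W tₘ) :=
        setLIntegral_mono' hsm fun t ht => ENNReal.ofReal_le_ofReal (hbound t ht)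
    _ ≤ ∫⁻ t in Icc 0 (2 * tₘ), ENNReal.ofReal ((2 - t / tₘ) * W tₘ) := lintegral_mono_set hsub
    _ = ENNReal.ofReal (2 * (tₘ * W tₘ)) := by
        rw [← integral_Icc_two_sub_div_mul htₘ0, ofReal_integral_eq_lintegral_ofReal
          (Continuous.integrableOn_Icc (by fun_prop))]
        refine (ae_restrict_iff' measurableSet_Icc).2 (ae_of_all _ fun t ht => ?_)
        have : t / tₘ ≤ 2 := (div_le_iff₀ htₘ0).2 (by linarith [ht.2])
        exact mul_nonneg (by linarith) hWₘ.le

end Concave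

theorem Convex.exists_horizontal_chord_volume_le {K : Set (ℝ × ℝ)} (hKc : IsCompact K)
    (hK : Convex ℝ K) (hne : K.Nonempty) (hK0 : ∀ p ∈ K, 0 ≤ p.2) :
    ∃ x₁ x₂ t, (x₁, t) ∈ K ∧ (x₂, t) ∈ K ∧ (volume K).toReal ≤ 2 * (t * (x₂ - x₁)) := by
  obtain ⟨x₁, x₂, tₘ, h₁, h₂, hmax⟩ := hKc.exists_isMaxOn_height_mul_chord hne
  have htₘ : tₘ ∈ Prod.snd '' K := ⟨_, h₁, rfl⟩
  have hchord : ∀ t ∈ Prod.snd '' K, t * sliceWidth K t ≤ tₘ * (x₂ - x₁) := fun t ht => by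
    rw [sliceWidth_eq hKc hK ht]
    exact hmax _ _ t (sInf_mem_horizontalSlice hKc ht) (sSup_mem_horizontalSlice hKc ht)
  have hwidth : x₂ - x₁ ≤ sliceWidth K tₘ := by
    have hS := hKc.horizontalSlice tₘ
    rw [sliceWidth_eq hKc hK htₘ]
    exact sub_le_sub (le_csSup hS.bddAbove h₂) (csInf_le hS.bddBelow h₁)
  have hmaxOn : IsMaxOn (fun t => t * sliceWidth K t) (Prod.snd '' K) tₘ :=
    isMaxOn_iff.2 fun t ht => (hchord t ht).trans (mul_le_mul_of_nonneg_left hwidth (hK0 _ h₁))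
  have hint := (concaveOn_sliceWidth hKc hK).setLIntegral_le_of_isMaxOn
    (by rintro _ ⟨p, hp, rfl⟩; exact hK0 p hp) (fun _ _ => ENNReal.toReal_nonneg) htₘ hmaxOn
  refine ⟨x₁, x₂, tₘ, h₁, h₂, ENNReal.toReal_le_of_le_ofReal ?_ ?_⟩
  · simpa using hmax x₁ x₁ tₘ h₁ h₁
  · rw [volume_eq_setLIntegral_sliceWidth hKc]
    exact hint.trans (ENNReal.ofReal_le_ofReal (by linarith [hchord tₘ htₘ]))

theorem Real.volume_Icc_prod_Icc_toReal {p q c d : ℝ} (hpq : p ≤ q) (hcd : c ≤ d) :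
    (volume (Icc p q ×ˢ Icc c d)).toReal = (q - p) * (d - c) := by
  rw [Measure.volume_eq_prod, Measure.prod_prod, Real.volume_Icc, Real.volume_Icc,
    ← ENNReal.ofReal_mul (sub_nonneg.2 hpq),
    ENNReal.toReal_ofReal (mul_nonneg (sub_nonneg.2 hpq) (sub_nonneg.2 hcd))]

theorem IsQuad.convex {Q : Set (ℝ × ℝ)} (hQ : IsQuad Q) : Convex ℝ Q := by
  obtain ⟨_, _, _, _, -, rfl⟩ := hQ
  exact convex_convexHull ℝ _

theorem IsQuad.isCompact {Q : Set (ℝ × ℝ)} (hQ : IsQuad Q) : IsCompact Q := by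
  obtain ⟨_, _, _, _, -, rfl⟩ := hQ
  exact (Set.toFinite _).isCompact_convexHull (𝕜 := ℝ)

theorem IsQuad.nonempty {Q : Set (ℝ × ℝ)} (hQ : IsQuad Q) : Q.Nonempty := by
  obtain ⟨p, _, _, _, -, rfl⟩ := hQ
  exact ⟨p, subset_convexHull ℝ _ (by simp)⟩

theorem max_rectangle_half_approximates_max_quad_general (a b : ℝ) (f : ℝ → ℝ)
    (T : Set (ℝ × ℝ))
    (hT : T = {p : ℝ × ℝ | p.1 ∈ Set.Icc a b ∧ p.2 ∈ Set.Icc 0 (f p.1)})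
    (Astar Rstar : ℝ)
    (hQmax : ∃ Q : Set (ℝ × ℝ), IsQuad Q ∧ Q ⊆ T ∧ (volume Q).toReal = Astar)
    (hRmax : ∃ R : Set (ℝ × ℝ), IsRect R ∧ R ⊆ T ∧ (volume R).toReal = Rstar)
    (hRub : ∀ R : Set (ℝ × ℝ), IsRect R → R ⊆ T → (volume R).toReal ≤ Rstar) :
    Rstar ≥ (1 / 2) * Astar := by
  obtain ⟨Q, hQ, hQT, rfl⟩ := hQmax
  have hQ0 : ∀ p ∈ Q, 0 ≤ p.2 := fun p hp => by
    have h := hQT hp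
    rw [hT] at h
    exact h.2.1
  obtain ⟨x₁, x₂, t, h₁, h₂, hvol⟩ :=
    hQ.convex.exists_horizontal_chord_volume_le hQ.isCompact hQ.nonempty hQ0
  by_cases hpos : 0 < t * (x₂ - x₁)
  · have ht : 0 < t := (hQ0 _ h₁).lt_of_ne (by rintro rfl; simp at hpos)
    have hx₁₂ : x₁ < x₂ := sub_pos.1 (pos_of_mul_pos_right hpos ht.le)
    have hR : Icc x₁ x₂ ×ˢ Icc 0 t ⊆ T := by
      rintro ⟨x, y⟩ ⟨hx, hy⟩
      have hxt := hQT ((hQ.convex.horizontalSlice t).ordConnected.out h₁ h₂ hx)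
      rw [hT] at hxt ⊢
      exact ⟨hxt.1, hy.1, hy.2.trans hxt.2.2⟩
    have hRt := hRub _ ⟨x₁, x₂, 0, t, hx₁₂, ht, rfl⟩ hR
    rw [Real.volume_Icc_prod_Icc_toReal hx₁₂.le ht.le] at hRt
    linarith
  · obtain ⟨R, -, -, rfl⟩ := hRmax
    linarith [ENNReal.toReal_nonneg (a := volume R)]

theorem max_rectangle_half_approximates_max_quad (a b : ℝ) (f : ℝ → ℝ)
    (hf : ∀ x ∈ Set.Icc a b, 0 ≤ f x) (hcont : ContinuousOn f (Set.Icc a b))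
    (T : Set (ℝ × ℝ))
    (hT : T = {p : ℝ × ℝ | p.1 ∈ Set.Icc a b ∧ p.2 ∈ Set.Icc 0 (f p.1)})
    (Astar Rstar : ℝ)
    (hQmax : ∃ Q : Set (ℝ × ℝ), IsQuad Q ∧ Q ⊆ T ∧ (volume Q).toReal = Astar)
    (hQub : ∀ Q : Set (ℝ × ℝ), IsQuad Q → Q ⊆ T → (volume Q).toReal ≤ Astar)
    (hRmax : ∃ R : Set (ℝ × ℝ), IsRect R ∧ R ⊆ T ∧ (volume R).toReal = Rstar)
    (hRub : ∀ R : Set (ℝ × ℝ), IsRect R → R ⊆ T → (volume R).toReal ≤ Rstar) :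
    Rstar ≥ (1 / 2) * Astar :=
  max_rectangle_half_approximates_max_quad_general a b f T hT Astar Rstar hQmax hRmax hRub
end

section
/- Let b, b' be two points on the x-axis with x(b) < x(b'), and let aa' and cc' be two non-horizontal segments ('left edge' ℓ through b and 'right edge' r through b'') that, together with the segment bb' of the x-axis, bound a convex region (trapezoid/triangle) A. For a chord C of A with endpoints on ℓ and r, let Q(C) denote the convex quadrilateral bounded below by the x-axis, on the sides by ℓ and r, and above by C. Then area(Q(C)) is maximized over all chords C through a fixed interior point u exactly when C is the chord bisected at u, and the function sending the chord's left endpoint height to area(Q(C)) (over chords tangent to a fixed convex polygonal obstacle from above, i.e., supported by edges of a lower convex hull) is unimodal. -/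
/-!
In the affine frame with origin `o` and axes `p - o`, `q - o`, the chord from `o + a • (p - o)` to
`o + b • (q - o)` cuts the corner triangle of area `a * b / 2` off the standard triangle, so the
quadrilateral below it has area `|det| * (1 - a * b) / 2`. The chord passes through
`u = o + s • (p - o) + t • (q - o)` exactly when `s / a + t / b = 1`, and then AM–GM gives
`a * b ≥ 4 * s * t`, with equality only for `a = 2 * s`, `b = 2 * t`, i.e. when `u` bisects the
chord.
-/

open MeasureTheory Set

section AffineImage

variable {E : Type*} [NormedAddCommGroup E] [NormedSpace ℝ E] [MeasurableSpace E] [BorelSpace E]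
  [FiniteDimensional ℝ E] (μ : Measure E) [μ.IsAddHaarMeasure]

theorem addHaar_image_const_add_linearMap (c : E) (L : E →ₗ[ℝ] E) (s : Set E) :
    μ ((fun x => c + L x) '' s) = ENNReal.ofReal |LinearMap.det L| * μ s := by
  rw [show (fun x => c + L x) = (c +ᵥ ·) ∘ L from rfl, image_comp, image_vadd, measure_vadd,
    Measure.addHaar_image_linearMap]

theorem addHaar_setOf_linearMap_eq {f : E →ₗ[ℝ] ℝ} (hf : f ≠ 0) (r : ℝ) :
    μ {x | f x = r} = 0 := by
  let H : AffineSubspace ℝ E := AffineSubspace.comap f.toAffineMap (AffineSubspace.mk' r ⊥)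
  have hH : ∀ x, x ∈ H ↔ f x = r := fun x => by simp [H, AffineSubspace.mem_mk', sub_eq_zero]
  have hset : {x | f x = r} = (H : Set E) := by
    ext x
    exact (hH x).symm
  rw [hset]
  refine Measure.addHaar_affineSubspace μ H fun htop => hf (LinearMap.ext fun x => ?_)
  have hconst : ∀ y, f y = r := fun y => (hH y).1 (htop ▸ AffineSubspace.mem_top ℝ E y)
  rw [LinearMap.zero_apply, hconst x, ← hconst 0, map_zero]

end AffineImage

theorem convexHull_image_const_add_linearMap {E F : Type*} [AddCommGroup E] [Module ℝ E]
    [AddCommGroup F] [Module ℝ F] (c : F) (L : E →ₗ[ℝ] F) (s : Set E) :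
    convexHull ℝ ((fun x => c + L x) '' s) = (fun x => c + L x) '' convexHull ℝ s := by
  rw [show (fun x => c + L x) = (c +ᵥ ·) ∘ L from rfl, image_comp, image_comp, image_vadd,
    image_vadd, convexHull_vadd, L.image_convexHull]

namespace ChordQuadrilateral

def cross (v w : ℝ × ℝ) : ℝ := v.1 * w.2 - w.1 * v.2

noncomputable def planeLinearMap (v w : ℝ × ℝ) : (ℝ × ℝ) →ₗ[ℝ] ℝ × ℝ :=
  Matrix.toLin (Module.Basis.finTwoProd ℝ) (Module.Basis.finTwoProd ℝ) !![v.1, w.1; v.2, w.2]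

@[simp]
theorem planeLinearMap_apply (v w z : ℝ × ℝ) : planeLinearMap v w z = z.1 • v + z.2 • w := by
  rw [planeLinearMap, Matrix.toLin_finTwoProd_apply]
  ext <;> simp [mul_comm]

theorem det_planeLinearMap (v w : ℝ × ℝ) : LinearMap.det (planeLinearMap v w) = cross v w := by
  rw [planeLinearMap, LinearMap.det_toLin, Matrix.det_fin_two_of, cross]

theorem volume_setOf_linear_eq (α β r : ℝ) (hβ : β ≠ 0) :
    volume {z : ℝ × ℝ | α * z.1 + β * z.2 = r} = 0 := by
  let f : (ℝ × ℝ) →ₗ[ℝ] ℝ := α • LinearMap.fst ℝ ℝ ℝ + β • LinearMap.snd ℝ ℝ ℝ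
  have hf : f ≠ 0 := fun h => hβ (by simpa [f] using LinearMap.congr_fun h (0, 1))
  simpa [f] using addHaar_setOf_linearMap_eq volume hf r

theorem volume_union_convexHull_of_separated {s t : Set (ℝ × ℝ)} (ht : t.Finite) {α β r : ℝ}
    (hβ : β ≠ 0) (hs : ∀ z ∈ s, α * z.1 + β * z.2 ≤ r) (ht' : ∀ z ∈ t, r ≤ α * z.1 + β * z.2) :
    volume (convexHull ℝ s ∪ convexHull ℝ t) =
      volume (convexHull ℝ s) + volume (convexHull ℝ t) := by
  have hlin : IsLinearMap ℝ fun z : ℝ × ℝ => α * z.1 + β * z.2 :=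
    (α • LinearMap.fst ℝ ℝ ℝ + β • LinearMap.snd ℝ ℝ ℝ).isLinear
  refine measure_union₀ (ht.isCompact_convexHull ℝ).isClosed.measurableSet.nullMeasurableSet ?_
  refine measure_mono_null (fun z hz => ?_) (volume_setOf_linear_eq α β r hβ)
  exact le_antisymm (convexHull_min hs (convex_halfSpace_le hlin r) hz.1)
    (convexHull_min ht' (convex_halfSpace_ge hlin r) hz.2)

theorem mem_convexHull_triple {x y z : ℝ × ℝ} {α β γ : ℝ} (hα : 0 ≤ α) (hβ : 0 ≤ β)
    (hγ : 0 ≤ γ) (hsum : α + β + γ = 1) :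
    α • x + β • y + γ • z ∈ convexHull ℝ ({x, y, z} : Set (ℝ × ℝ)) := by
  have := (convex_convexHull ℝ ({x, y, z} : Set (ℝ × ℝ))).sum_mem (t := Finset.univ)
    (w := ![α, β, γ]) (z := ![x, y, z]) (by simp [Fin.forall_fin_succ, hα, hβ, hγ])
    (by simp [Fin.sum_univ_three, hsum])
    fun i _ => subset_convexHull ℝ _ (by fin_cases i <;> simp)
  simpa [Fin.sum_univ_three] using this

def stdTriangle : Set (ℝ × ℝ) := convexHull ℝ {0, (1, 0), (0, 1)}

theorem mem_stdTriangle {x y : ℝ} (hx : 0 ≤ x) (hy : 0 ≤ y) (hxy : x + y ≤ 1) :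
    (x, y) ∈ stdTriangle := by
  simpa [stdTriangle] using mem_convexHull_triple (x := 0) (y := ((1 : ℝ), (0 : ℝ))) (z := (0, 1))
    (α := 1 - x - y) (by linarith) hx hy (by ring)

/-- The standard triangle and its reflection through `(1/2, 1/2)` tile the unit square. -/
theorem volume_stdTriangle : volume stdTriangle = ENNReal.ofReal (1 / 2) := by
  set g : ℝ × ℝ → ℝ × ℝ := fun z => (1, 1) + planeLinearMap (-1, 0) (0, -1) z with hg_def
  have hg : g '' stdTriangle = convexHull ℝ {(1, 1), (0, 1), (1, 0)} := by
    rw [stdTriangle, hg_def, ← convexHull_image_const_add_linearMap]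
    simp [image_insert_eq]
  have hvol_g : volume (g '' stdTriangle) = volume stdTriangle := by
    rw [addHaar_image_const_add_linearMap, det_planeLinearMap]
    norm_num [cross]
  have hsq : Icc (0 : ℝ) 1 ×ˢ Icc (0 : ℝ) 1 = stdTriangle ∪ g '' stdTriangle := by
    apply Subset.antisymm
    · rintro ⟨x, y⟩ ⟨⟨hx0, hx1⟩, hy0, hy1⟩
      rcases le_total (x + y) 1 with h | h
      · exact Or.inl (mem_stdTriangle hx0 hy0 h)
      · right
        rw [hg]
        convert mem_convexHull_triple (x := ((1 : ℝ), (1 : ℝ))) (y := (0, 1)) (z := (1, 0))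
          (α := x + y - 1) (β := 1 - x) (γ := 1 - y) (by linarith) (by linarith) (by linarith)
          (by ring) using 1
        ext <;> simp
    · rw [hg]
      refine union_subset (convexHull_min ?_ ((convex_Icc 0 1).prod (convex_Icc 0 1)))
        (convexHull_min ?_ ((convex_Icc 0 1).prod (convex_Icc 0 1))) <;>
      · simp [insert_subset_iff, Prod.le_def]
  have hsplit : volume (stdTriangle ∪ g '' stdTriangle) =
      volume stdTriangle + volume (g '' stdTriangle) := by
    rw [hg, stdTriangle]
    exact volume_union_convexHull_of_separated (toFinite _) one_ne_zero (α := 1) (r := 1)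
      (by simp) (by simp)
  have hsq_vol : volume (Icc (0 : ℝ) 1 ×ˢ Icc (0 : ℝ) 1) = 1 := by
    rw [Measure.volume_eq_prod, Measure.prod_prod]
    simp
  rw [← hsq, hsq_vol, hvol_g, ← mul_two] at hsplit
  rw [one_div, ENNReal.ofReal_inv_of_pos two_pos, ENNReal.ofReal_ofNat]
  exact ENNReal.eq_inv_of_mul_eq_one_left hsplit.symm

theorem volume_convexHull_triangle (x y z : ℝ × ℝ) :
    volume (convexHull ℝ {x, y, z}) = ENNReal.ofReal (|cross (y - x) (z - x)| / 2) := by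
  have himage : (fun p => x + planeLinearMap (y - x) (z - x) p) '' {0, (1, 0), (0, 1)} =
      {x, y, z} := by
    simp [image_insert_eq]
  rw [← himage, convexHull_image_const_add_linearMap, addHaar_image_const_add_linearMap,
    ← stdTriangle, volume_stdTriangle, det_planeLinearMap, ← ENNReal.ofReal_mul (abs_nonneg _)]
  ring_nf

def stdQuadrilateral (a b : ℝ) : Set (ℝ × ℝ) := convexHull ℝ {(1, 0), (0, 1), (0, b), (a, 0)}

variable {a b s t : ℝ}

/-- The chord cuts the corner triangle `T` off the standard triangle, leaving the quadrilateral. -/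
theorem volume_stdQuadrilateral_le (ha : 0 < a) (ha₁ : a ≤ 1) (hb : 0 < b) (hb₁ : b ≤ 1) :
    volume (stdQuadrilateral a b) ≤ ENNReal.ofReal ((1 - a * b) / 2) := by
  set T := convexHull ℝ {((0 : ℝ), (0 : ℝ)), (a, 0), (0, b)}
  have hT : volume T = ENNReal.ofReal (a * b / 2) := by
    rw [volume_convexHull_triangle]
    simp [cross, abs_of_pos (mul_pos ha hb)]
  have hsub : T ∪ stdQuadrilateral a b ⊆ stdTriangle := by
    refine union_subset (convexHull_min ?_ (convex_convexHull ℝ _))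
      (convexHull_min ?_ (convex_convexHull ℝ _)) <;>
    · simp only [insert_subset_iff, singleton_subset_iff]
      and_intros <;> apply mem_stdTriangle <;> linarith
  have hsplit : volume (T ∪ stdQuadrilateral a b) = volume T + volume (stdQuadrilateral a b) :=
    volume_union_convexHull_of_separated (toFinite _) ha.ne' (α := b) (r := a * b)
      (by simp [mul_comm, mul_pos ha hb |>.le])
      (by simp [mul_comm, mul_le_of_le_one_left hb.le ha₁, mul_le_of_le_one_right ha.le hb₁])
  have hle := (measure_mono hsub).trans_eq volume_stdTriangle
  rw [hsplit, hT] at hle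
  rw [show (1 - a * b) / 2 = 1 / 2 - a * b / 2 by ring, ENNReal.ofReal_sub _ (by positivity)]
  exact ENNReal.le_sub_of_add_le_left ENNReal.ofReal_ne_top hle

/-- The diagonal from `(1, 0)` to `(0, b)` splits the quadrilateral into two triangles. -/
theorem le_volume_stdQuadrilateral (ha₁ : a ≤ 1) (hb : 0 < b) (hb₁ : b ≤ 1) :
    ENNReal.ofReal ((1 - a * b) / 2) ≤ volume (stdQuadrilateral a b) := by
  set T₁ := convexHull ℝ {((1 : ℝ), (0 : ℝ)), (0, 1), (0, b)}
  set T₂ := convexHull ℝ {((1 : ℝ), (0 : ℝ)), (0, b), (a, 0)}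
  have hT₁ : volume T₁ = ENNReal.ofReal ((1 - b) / 2) := by
    rw [volume_convexHull_triangle, abs_of_nonneg (by simp [cross]; linarith)]
    simp [cross]; ring_nf
  have hT₂ : volume T₂ = ENNReal.ofReal (b * (1 - a) / 2) := by
    rw [volume_convexHull_triangle, abs_of_nonneg (by simp [cross]; nlinarith)]
    simp [cross]; ring_nf
  have hsub : T₂ ∪ T₁ ⊆ stdQuadrilateral a b :=
    union_subset (convexHull_mono (by simp [insert_subset_iff]))
      (convexHull_mono (by simp [insert_subset_iff]))
  have hsplit : volume (T₂ ∪ T₁) = volume T₂ + volume T₁ :=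
    volume_union_convexHull_of_separated (toFinite _) one_ne_zero (α := b) (r := b)
      (by simpa using mul_le_of_le_one_right hb.le ha₁) (by simpa using hb₁)
  rw [show (1 - a * b) / 2 = b * (1 - a) / 2 + (1 - b) / 2 by ring,
    ENNReal.ofReal_add (by nlinarith) (by linarith), ← hT₁, ← hT₂, ← hsplit]
  exact measure_mono hsub

theorem volume_convexHull_quadrilateral (p q o : ℝ × ℝ) (ha : 0 < a) (ha₁ : a ≤ 1)
    (hb : 0 < b) (hb₁ : b ≤ 1) :
    volume (convexHull ℝ {p, q, o + b • (q - o), o + a • (p - o)}) =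
      ENNReal.ofReal (|cross (p - o) (q - o)| * ((1 - a * b) / 2)) := by
  have himage : (fun z => o + planeLinearMap (p - o) (q - o) z) ''
      {(1, 0), (0, 1), (0, b), (a, 0)} = {p, q, o + b • (q - o), o + a • (p - o)} := by
    simp [image_insert_eq]
  rw [← himage, convexHull_image_const_add_linearMap, addHaar_image_const_add_linearMap,
    ← stdQuadrilateral, le_antisymm (volume_stdQuadrilateral_le ha ha₁ hb hb₁)
      (le_volume_stdQuadrilateral ha₁ hb hb₁),
    det_planeLinearMap, ← ENNReal.ofReal_mul (abs_nonneg _)]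

theorem eq_and_eq_of_smul_add_smul_eq {v w : ℝ × ℝ} (hvw : cross v w ≠ 0) {x y x' y' : ℝ}
    (h : x • v + y • w = x' • v + y' • w) : x = x' ∧ y = y' := by
  have h₁ := congrArg Prod.fst h
  have h₂ := congrArg Prod.snd h
  simp only [Prod.fst_add, Prod.snd_add, Prod.smul_fst, Prod.smul_snd, smul_eq_mul] at h₁ h₂
  have hx : (x - x') * cross v w = 0 := by unfold cross; linear_combination w.2 * h₁ - w.1 * h₂
  have hy : (y - y') * cross v w = 0 := by unfold cross; linear_combination v.1 * h₂ - v.2 * h₁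
  exact ⟨sub_eq_zero.1 ((mul_eq_zero.1 hx).resolve_right hvw),
    sub_eq_zero.1 ((mul_eq_zero.1 hy).resolve_right hvw)⟩

theorem mul_add_mul_eq_of_mem_segment {o v w : ℝ × ℝ} (hvw : cross v w ≠ 0)
    (hu : o + s • v + t • w ∈ segment ℝ (o + a • v) (o + b • w)) :
    b * s + a * t = a * b := by
  obtain ⟨k, m, -, -, hkm, hu⟩ := hu
  have hcoord : (k * a) • v + (m * b) • w = s • v + t • w := by
    linear_combination (norm := module) hu - hkm • o
  obtain ⟨rfl, rfl⟩ := eq_and_eq_of_smul_add_smul_eq hvw hcoord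
  linear_combination a * b * hkm

theorem four_mul_le_of_mul_add_mul_eq (ha : 0 < a) (hb : 0 < b)
    (h : b * s + a * t = a * b) : 4 * (s * t) ≤ a * b := by
  nlinarith [sq_nonneg (b * s - a * t), mul_pos ha hb]

theorem mul_eq_four_mul_iff_of_mul_add_mul_eq (ha : 0 < a) (hb : 0 < b)
    (h : b * s + a * t = a * b) : a * b = 4 * (s * t) ↔ a = 2 * s ∧ b = 2 * t := by
  constructor
  · intro hab
    have hsq : (b * s - a * t) ^ 2 = 0 := by
      linear_combination (b * s + a * t + a * b) * h + a * b * hab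
    have hbs : b * s = a * t := sub_eq_zero.1 (pow_eq_zero_iff two_ne_zero |>.1 hsq)
    exact ⟨by nlinarith, by nlinarith⟩
  · rintro ⟨rfl, rfl⟩
    ring

end ChordQuadrilateral

open ChordQuadrilateral in
theorem balanced_chord_maximizes_quadrilateral (p q o : ℝ × ℝ)
    (hp : p.2 = 0) (hq : q.2 = 0) (ho : 0 < o.2) (hpq : p.1 < q.1)
    (u : ℝ × ℝ) (s t : ℝ) (hs : 0 < s) (ht : 0 < t)
    (hu : u = o + s • (p - o) + t • (q - o))
    (hsf : 2 * s ≤ 1) (htf : 2 * t ≤ 1) :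
    ∀ a b : ℝ, 0 < a → a ≤ 1 → 0 < b → b ≤ 1 →
      u ∈ segment ℝ (o + a • (p - o)) (o + b • (q - o)) →
      (volume (convexHull ℝ
          ({p, q, o + b • (q - o), o + a • (p - o)} : Set (ℝ × ℝ)))
        ≤ volume (convexHull ℝ
          ({p, q, o + (2 * t) • (q - o), o + (2 * s) • (p - o)} : Set (ℝ × ℝ))) ∧
       (volume (convexHull ℝ
          ({p, q, o + b • (q - o), o + a • (p - o)} : Set (ℝ × ℝ)))
        = volume (convexHull ℝ
          ({p, q, o + (2 * t) • (q - o), o + (2 * s) • (p - o)} : Set (ℝ × ℝ)))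
        ↔ a = 2 * s ∧ b = 2 * t)) := by
  intro a b ha ha₁ hb hb₁ hseg
  have hcross : 0 < |cross (p - o) (q - o)| := by
    rw [show cross (p - o) (q - o) = o.2 * (q.1 - p.1) by
      simp only [cross, Prod.fst_sub, Prod.snd_sub, hp, hq]; ring]
    exact abs_pos_of_pos (mul_pos ho (sub_pos.2 hpq))
  have hchord := mul_add_mul_eq_of_mem_segment (abs_pos.1 hcross) (hu ▸ hseg)
  rw [volume_convexHull_quadrilateral p q o ha ha₁ hb hb₁,
    volume_convexHull_quadrilateral p q o (by linarith) hsf (by linarith) htf]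
  have hab : a * b ≤ 1 := by nlinarith
  have hst : 2 * s * (2 * t) ≤ 1 := by nlinarith
  rw [ENNReal.ofReal_le_ofReal_iff (by positivity),
    ENNReal.ofReal_eq_ofReal_iff (by positivity) (by positivity), mul_right_inj' hcross.ne',
    ← mul_eq_four_mul_iff_of_mul_add_mul_eq ha hb hchord]
  have := four_mul_le_of_mul_add_mul_eq ha hb hchord
  refine ⟨mul_le_mul_of_nonneg_left (by linarith) hcross.le, ?_⟩
  constructor <;> intro h <;> linarith
end
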